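/- Let $\delta x_{t+1} = \bar{A}_t \delta x_t + \bar{S}_t(\delta x_t) + \epsilon w_t$ with $\delta x_0 = 0$, where each $\bar{S}_t$ is a function satisfying $|\bar{S}_t(z)| \le C|z|^2$ for all $|z| \le 1$, and let $\delta x^l_{t+1} = \bar{A}_t \delta x^l_t + \epsilon w_t$ with $\delta x^l_0 = 0$. Then the error $e_t = \delta x_t - \delta x^l_t$ satisfies $|e_t| \le C_t \epsilon^2$ for some constant $C_t$ depending only on $t$, the bounds $|\bar{A}_s|$, $C$, and the noise bound $\max_s |w_s|$, provided $\epsilon$ is small enough that $|\delta x_s| \le 1$ for all $s \le t$. -/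

import Mathlib

/-!
While `|δxₛ| ≤ 1`, the remainder obeys `|S(δxₛ)| ≤ C |δxₛ|`, so `|δxₛ|` satisfies a linear
recursive inequality driven by `εW` and is `O(ε)`. The error `eₛ = δxₛ - δxₛˡ` obeys
`eₛ₊₁ = Aₛ eₛ + S(δxₛ)`, a linear recursion driven by `|S(δxₛ)| ≤ C δxₛ² = O(ε²)`,
hence is `O(ε²)`. Both steps compare `|uₛ|` with the solution of `Bₛ₊₁ = aₛ Bₛ + bₛ`,
which scales linearly with the forcing `b`.
-/

def linRecBound (a b : ℕ → ℝ) : ℕ → ℝ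
  | 0 => 0
  | s + 1 => a s * linRecBound a b s + b s

theorem linRecBound_const_mul (a b : ℕ → ℝ) (c : ℝ) (s : ℕ) :
    linRecBound a (fun s => c * b s) s = c * linRecBound a b s := by
  induction s with
  | zero => simp [linRecBound]
  | succ s ih => simp only [linRecBound, ih]; ring

theorem abs_le_linRecBound {a b u : ℕ → ℝ} {t : ℕ} (ha : ∀ s, 0 ≤ a s) (hu0 : u 0 = 0)
    (hstep : ∀ s < t, |u (s + 1)| ≤ a s * |u s| + b s) :
    ∀ s ≤ t, |u s| ≤ linRecBound a b s := by
  intro s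
  induction s with
  | zero => intro _; simp [hu0, linRecBound]
  | succ s ih =>
    intro hs
    calc |u (s + 1)| ≤ a s * |u s| + b s := hstep s hs
      _ ≤ a s * linRecBound a b s + b s := by gcongr; exacts [ha s, ih (Nat.le_of_succ_le hs)]

section Perturbation

variable {A : ℕ → ℝ} {S : ℕ → ℝ → ℝ} {w : ℕ → ℝ} {C W ε : ℝ} {x xl : ℕ → ℝ} {t : ℕ}

theorem abs_perturbation_le (hC : 0 ≤ C)
    (hS : ∀ (t : ℕ) (z : ℝ), |z| ≤ 1 → |S t z| ≤ C * z ^ 2) (hw : ∀ s, |w s| ≤ W)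
    (hx0 : x 0 = 0) (hx : ∀ t, x (t + 1) = A t * x t + S t (x t) + ε * w t) (hε : 0 < ε)
    (hsmall : ∀ s < t, |x s| ≤ 1) :
    ∀ s ≤ t, |x s| ≤ linRecBound (fun s => |A s| + C) (fun _ => W) s * ε := by
  have hstep : ∀ s < t, |x (s + 1)| ≤ (|A s| + C) * |x s| + ε * W := by
    intro s hs
    have hSx : |S s (x s)| ≤ C * |x s| :=
      calc |S s (x s)| ≤ C * |x s| ^ 2 := by rw [sq_abs]; exact hS s _ (hsmall s hs)
        _ ≤ C * |x s| := by
          gcongr; exact pow_le_of_le_one (abs_nonneg _) (hsmall s hs) two_ne_zero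
    calc |x (s + 1)| ≤ |A s * x s| + |S s (x s)| + |ε * w s| := by
          rw [hx]; exact abs_add_three _ _ _
      _ ≤ |A s| * |x s| + C * |x s| + ε * W := by
        rw [abs_mul, abs_mul, abs_of_pos hε]; gcongr; exact hw s
      _ = (|A s| + C) * |x s| + ε * W := by ring
  intro s hs
  rw [mul_comm, ← linRecBound_const_mul]
  exact abs_le_linRecBound (fun s => by positivity) hx0 hstep s hs

theorem abs_sub_linearization_le (hC : 0 ≤ C)
    (hS : ∀ (t : ℕ) (z : ℝ), |z| ≤ 1 → |S t z| ≤ C * z ^ 2) (hw : ∀ s, |w s| ≤ W)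
    (hx0 : x 0 = 0) (hxl0 : xl 0 = 0)
    (hx : ∀ t, x (t + 1) = A t * x t + S t (x t) + ε * w t)
    (hxl : ∀ t, xl (t + 1) = A t * xl t + ε * w t) (hε : 0 < ε)
    (hsmall : ∀ s < t, |x s| ≤ 1) :
    |x t - xl t| ≤ linRecBound (fun s => |A s|)
      (fun s => C * linRecBound (fun s => |A s| + C) (fun _ => W) s ^ 2) t * ε ^ 2 := by
  set M := linRecBound (fun s => |A s| + C) (fun _ => W)
  have hM := abs_perturbation_le hC hS hw hx0 hx hε hsmall
  have hstep : ∀ s < t, |x (s + 1) - xl (s + 1)| ≤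
      |A s| * |x s - xl s| + ε ^ 2 * (C * M s ^ 2) := by
    intro s hs
    have hSx : |S s (x s)| ≤ ε ^ 2 * (C * M s ^ 2) :=
      calc |S s (x s)| ≤ C * |x s| ^ 2 := by rw [sq_abs]; exact hS s _ (hsmall s hs)
        _ ≤ C * (M s * ε) ^ 2 := by gcongr; exact hM s hs.le
        _ = ε ^ 2 * (C * M s ^ 2) := by ring
    calc |x (s + 1) - xl (s + 1)| = |A s * (x s - xl s) + S s (x s)| := by
          rw [hx, hxl]; ring_nf
      _ ≤ |A s| * |x s - xl s| + ε ^ 2 * (C * M s ^ 2) := by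
        rw [← abs_mul]; exact (abs_add_le _ _).trans (by gcongr)
  rw [mul_comm, ← linRecBound_const_mul]
  exact abs_le_linRecBound (u := fun s => x s - xl s) (fun s => abs_nonneg _)
    (by simp [hx0, hxl0]) hstep t le_rfl

end Perturbation

/-- Lemma 1 (scalar case): the deviation of the nonlinear closed-loop perturbation
state from its linearization is `O(ε²)`. -/
theorem stmt0 (A : ℕ → ℝ) (S : ℕ → ℝ → ℝ) (w : ℕ → ℝ) (C W : ℝ)
    (hS : ∀ (t : ℕ) (z : ℝ), |z| ≤ 1 → |S t z| ≤ C * z ^ 2)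
    (hw : ∀ s, |w s| ≤ W)
    (x xl : ℝ → ℕ → ℝ)
    (hx0 : ∀ ε, x ε 0 = 0) (hxl0 : ∀ ε, xl ε 0 = 0)
    (hx : ∀ ε t, x ε (t + 1) = A t * x ε t + S t (x ε t) + ε * w t)
    (hxl : ∀ ε t, xl ε (t + 1) = A t * xl ε t + ε * w t)
    (t : ℕ) :
    ∃ Ct : ℝ, ∀ ε : ℝ, 0 < ε → (∀ s ≤ t, |x ε s| ≤ 1) →
      |x ε t - xl ε t| ≤ Ct * ε ^ 2 := by
  have hC : 0 ≤ C := (abs_nonneg _).trans (by simpa using hS 0 1 (by norm_num))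
  exact ⟨_, fun ε hε hsmall => abs_sub_linearization_le hC hS hw (hx0 ε) (hxl0 ε) (hx ε)
    (hxl ε) hε fun s hs => hsmall s hs.le⟩
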